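/- arXiv:2505.13022 — 2 statements merged into one kernel-verified Lean document; each statement's English description precedes it below -/
import Mathlib

section
/- In the finite clustering setup with data in ℝⁿ and squared Euclidean distance, if a partition An of Ω into at most K nonempty classes is globally clustered with respect to s, then An is locally clustered with respect to s. -/
/-- The cluster (fiber) of `ω` under the labeling `g` of `Ω` into at most `K` nonempty
classes. -/
def cls {Ω : Type*} [Fintype Ω] {K : ℕ} (g : Ω → Fin K) (ω : Ω) : Finset Ω :=
  Finset.univ.filter fun ω' => g ω' = g ω

/-- The prototype (`p`-weighted mean) of the data `s` on the cluster `c`. -/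
noncomputable def protoE {Ω : Type*} {n : ℕ} (p : Ω → ℝ)
    (s : Ω → EuclideanSpace ℝ (Fin n)) (c : Finset Ω) : EuclideanSpace ℝ (Fin n) :=
  (∑ ω ∈ c, p ω)⁻¹ • ∑ ω ∈ c, p ω • s ω

open Finset RealInnerProductSpace

lemma protoE_smul {Ω : Type*} {n : ℕ} (p : Ω → ℝ) (s : Ω → EuclideanSpace ℝ (Fin n))
    (c : Finset Ω) (hW : (∑ ω ∈ c, p ω) ≠ 0) :
    (∑ ω ∈ c, p ω) • protoE p s c = ∑ ω ∈ c, p ω • s ω := by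
  rw [protoE, smul_smul, mul_inv_cancel₀ hW, one_smul]

/-- The weighted mean minimizes the weighted sum of squared distances. -/
lemma mean_min {Ω : Type*} {n : ℕ} (p : Ω → ℝ) (s : Ω → EuclideanSpace ℝ (Fin n))
    (c : Finset Ω) (hp : ∀ ω ∈ c, 0 < p ω) (z : EuclideanSpace ℝ (Fin n)) :
    ∑ ω ∈ c, p ω * ‖s ω - protoE p s c‖ ^ 2 ≤ ∑ ω ∈ c, p ω * ‖s ω - z‖ ^ 2 := by
  rcases c.eq_empty_or_nonempty with h | h
  · simp [h]
  · set m := protoE p s c with hm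
    have hW : 0 < ∑ ω ∈ c, p ω := Finset.sum_pos hp h
    have hsum : ∑ ω ∈ c, p ω • (s ω - m) = 0 := by
      rw [Finset.sum_congr rfl (fun ω _ => smul_sub (p ω) (s ω) m), Finset.sum_sub_distrib,
        ← Finset.sum_smul, ← protoE_smul p s c hW.ne', sub_self]
    have key : ∀ ω ∈ c, p ω * ‖s ω - z‖ ^ 2
        = p ω * ‖s ω - m‖ ^ 2 + (2 * ⟪p ω • (s ω - m), m - z⟫ + p ω * ‖m - z‖ ^ 2) := by
      intro ω _
      have hz : s ω - z = (s ω - m) + (m - z) := by abel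
      rw [hz, norm_add_sq_real, real_inner_smul_left]
      ring
    rw [Finset.sum_congr rfl key, Finset.sum_add_distrib, Finset.sum_add_distrib,
      ← Finset.mul_sum, ← sum_inner, hsum, inner_zero_left, mul_zero, zero_add]
    have h0 : (0:ℝ) ≤ ∑ ω ∈ c, p ω * ‖m - z‖ ^ 2 :=
      Finset.sum_nonneg fun ω hw => mul_nonneg (hp ω hw).le (by positivity)
    linarith

/-- **Globally clustered implies locally clustered** (squared Euclidean distance, data
in `ℝⁿ`): if the partition of `Ω` induced by `g` minimizes the total weighted squared
prediction error among all partitions into at most `K` nonempty classes, then every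
point is weakly closer to the prototype of its own cluster than to the prototype of any
other cluster. -/
theorem globally_clustered_implies_locally_clustered
    {Ω : Type*} [Fintype Ω] [Nonempty Ω] {n : ℕ}
    (p : Ω → ℝ) (hp : ∀ ω, 0 < p ω) (hp1 : (∑ ω, p ω) = 1)
    (s : Ω → EuclideanSpace ℝ (Fin n))
    (K : ℕ) (hK : 1 ≤ K) (g : Ω → Fin K)
    (hglob : ∀ g' : Ω → Fin K,
      (∑ ω, p ω * ‖s ω - protoE p s (cls g ω)‖ ^ 2) ≤
        ∑ ω, p ω * ‖s ω - protoE p s (cls g' ω)‖ ^ 2) :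
    ∀ ω ω' : Ω,
      ‖s ω - protoE p s (cls g ω)‖ ^ 2 ≤ ‖s ω - protoE p s (cls g ω')‖ ^ 2 := by
  classical
  intro ω0 ω1
  by_cases hsame : g ω1 = g ω0
  · have hc : cls g ω1 = cls g ω0 := by simp [cls, hsame]
    rw [hc]
  by_contra hlt
  push_neg at hlt
  set g' : Ω → Fin K := Function.update g ω0 (g ω1) with hg'
  -- fibers of g and g'
  set FG : Fin K → Finset Ω := fun k => Finset.univ.filter fun x => g x = k with hFG
  set FG' : Fin K → Finset Ω := fun k => Finset.univ.filter fun x => g' x = k with hFG'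
  have hclsg : ∀ ω, cls g ω = FG (g ω) := fun ω => rfl
  have hclsg' : ∀ ω, cls g' ω = FG' (g' ω) := fun ω => rfl
  -- step 1: group cost(g') fiberwise
  have step1 : (∑ ω, p ω * ‖s ω - protoE p s (cls g' ω)‖ ^ 2)
      = ∑ k : Fin K, ∑ ω ∈ FG' k, p ω * ‖s ω - protoE p s (FG' k)‖ ^ 2 := by
    rw [← Finset.sum_fiberwise Finset.univ g'
      (fun ω => p ω * ‖s ω - protoE p s (cls g' ω)‖ ^ 2)]
    refine Finset.sum_congr rfl fun k _ => Finset.sum_congr rfl fun ω hω => ?_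
    have : g' ω = k := (Finset.mem_filter.mp hω).2
    rw [hclsg' ω, this]
  -- step 2: each fiber's mean beats the old prototype as center
  have step2 : ∀ k : Fin K, ∑ ω ∈ FG' k, p ω * ‖s ω - protoE p s (FG' k)‖ ^ 2
      ≤ ∑ ω ∈ FG' k, p ω * ‖s ω - protoE p s (FG k)‖ ^ 2 :=
    fun k => mean_min p s (FG' k) (fun ω _ => hp ω) _
  -- step 3: regroup
  have step3 : (∑ k : Fin K, ∑ ω ∈ FG' k, p ω * ‖s ω - protoE p s (FG k)‖ ^ 2)
      = ∑ ω, p ω * ‖s ω - protoE p s (FG (g' ω))‖ ^ 2 := by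
    rw [← Finset.sum_fiberwise Finset.univ g'
      (fun ω => p ω * ‖s ω - protoE p s (FG (g' ω))‖ ^ 2)]
    refine Finset.sum_congr rfl fun k _ => Finset.sum_congr rfl fun ω hω => ?_
    have : g' ω = k := (Finset.mem_filter.mp hω).2
    rw [this]
  -- step 4: strictly smaller than cost(g)
  have step4 : (∑ ω, p ω * ‖s ω - protoE p s (FG (g' ω))‖ ^ 2)
      < ∑ ω, p ω * ‖s ω - protoE p s (cls g ω)‖ ^ 2 := by
    refine Finset.sum_lt_sum (fun ω _ => ?_) ⟨ω0, Finset.mem_univ ω0, ?_⟩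
    · by_cases hω : ω = ω0
      · subst hω
        have h1 : g' ω = g ω1 := Function.update_self _ _ _
        rw [h1, hclsg ω]
        have := le_of_lt hlt
        have h2 : cls g ω1 = FG (g ω1) := hclsg ω1
        rw [h2] at this
        exact mul_le_mul_of_nonneg_left this (hp ω).le
      · have h1 : g' ω = g ω := Function.update_of_ne hω _ _
        rw [h1, hclsg ω]
    · have h1 : g' ω0 = g ω1 := Function.update_self _ _ _
      rw [h1, hclsg ω0]
      have h2 : cls g ω1 = FG (g ω1) := hclsg ω1
      rw [h2] at hlt
      exact mul_lt_mul_of_pos_left hlt (hp ω0)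
  have hchain := hglob g'
  have := calc (∑ ω, p ω * ‖s ω - protoE p s (cls g' ω)‖ ^ 2)
      = ∑ k : Fin K, ∑ ω ∈ FG' k, p ω * ‖s ω - protoE p s (FG' k)‖ ^ 2 := step1
    _ ≤ ∑ k : Fin K, ∑ ω ∈ FG' k, p ω * ‖s ω - protoE p s (FG k)‖ ^ 2 :=
        Finset.sum_le_sum fun k _ => step2 k
    _ = ∑ ω, p ω * ‖s ω - protoE p s (FG (g' ω))‖ ^ 2 := step3
    _ < ∑ ω, p ω * ‖s ω - protoE p s (cls g ω)‖ ^ 2 := step4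
  linarith
end

section
/- In the finite clustering setup with data in the interior of the probability simplex and Kullback–Leibler divergence, if a partition An of Ω into at most K nonempty classes is globally clustered with respect to s, then An is locally clustered with respect to s. -/
/-- The prototype (`p`-weighted mean) of the data `s` on the cluster `c`. -/
noncomputable def proto {Ω A : Type*} (p : Ω → ℝ) (s : Ω → A → ℝ) (c : Finset Ω) :
    A → ℝ :=
  fun a => (∑ ω ∈ c, p ω * s ω a) / ∑ ω ∈ c, p ω

/-- Kullback–Leibler divergence between probability vectors on the finite set `A`. -/
noncomputable def klDiv {A : Type*} [Fintype A] (x y : A → ℝ) : ℝ :=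
  ∑ a, x a * Real.log (x a / y a)

section Aux
variable {Ω A : Type*} [Fintype Ω] [Fintype A]

lemma proto_pos (p : Ω → ℝ) (hp : ∀ ω, 0 < p ω) (s : Ω → A → ℝ)
    (hspos : ∀ ω a, 0 < s ω a) {c : Finset Ω} (hc : c.Nonempty) (a : A) :
    0 < proto p s c a := by
  unfold proto
  exact div_pos (Finset.sum_pos (fun ω _ => mul_pos (hp ω) (hspos ω a)) hc)
    (Finset.sum_pos (fun ω _ => hp ω) hc)

lemma proto_sum_one (p : Ω → ℝ) (hp : ∀ ω, 0 < p ω) (s : Ω → A → ℝ)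
    (hs1 : ∀ ω, ∑ a, s ω a = 1) {c : Finset Ω} (hc : c.Nonempty) :
    ∑ a, proto p s c a = 1 := by
  unfold proto
  rw [← Finset.sum_div, Finset.sum_comm]
  have : ∀ ω ∈ c, ∑ a, p ω * s ω a = p ω := fun ω _ => by
    rw [← Finset.mul_sum, hs1, mul_one]
  rw [Finset.sum_congr rfl this]
  exact div_self (ne_of_gt (Finset.sum_pos (fun ω _ => hp ω) hc))

lemma klDiv_nonneg' {x y : A → ℝ} (hx : ∀ a, 0 < x a) (hy : ∀ a, 0 < y a)
    (hx1 : ∑ a, x a = 1) (hy1 : ∑ a, y a = 1) : 0 ≤ klDiv x y := by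
  have h : ∀ a, x a - y a ≤ x a * Real.log (x a / y a) := by
    intro a
    have hlog : Real.log (y a / x a) ≤ y a / x a - 1 :=
      Real.log_le_sub_one_of_pos (div_pos (hy a) (hx a))
    have h2 : x a * Real.log (y a / x a) ≤ y a - x a := by
      have := mul_le_mul_of_nonneg_left hlog (le_of_lt (hx a))
      calc x a * Real.log (y a / x a) ≤ x a * (y a / x a - 1) := this
        _ = y a - x a := by rw [mul_sub, mul_one, mul_comm, div_mul_cancel₀ _ (ne_of_gt (hx a))]
    have hrw : Real.log (x a / y a) = - Real.log (y a / x a) := by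
      rw [← Real.log_inv, inv_div]
    rw [hrw]; linarith
  calc (0:ℝ) = ∑ a, x a - ∑ a, y a := by rw [hx1, hy1]; ring
    _ = ∑ a, (x a - y a) := by rw [Finset.sum_sub_distrib]
    _ ≤ ∑ a, x a * Real.log (x a / y a) := Finset.sum_le_sum (fun a _ => h a)
    _ = klDiv x y := rfl

lemma centroid_opt (p : Ω → ℝ) (hp : ∀ ω, 0 < p ω) (s : Ω → A → ℝ)
    (hspos : ∀ ω a, 0 < s ω a) (hs1 : ∀ ω, ∑ a, s ω a = 1)
    {c : Finset Ω} (hc : c.Nonempty) {y : A → ℝ} (hy : ∀ a, 0 < y a)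
    (hy1 : ∑ a, y a = 1) :
    ∑ ω ∈ c, p ω * klDiv (s ω) (proto p s c) ≤ ∑ ω ∈ c, p ω * klDiv (s ω) y := by
  set β := proto p s c with hβ
  have hW : 0 < ∑ ω ∈ c, p ω := Finset.sum_pos (fun ω _ => hp ω) hc
  have hβpos : ∀ a, 0 < β a := proto_pos p hp s hspos hc
  have hβ1 : ∑ a, β a = 1 := proto_sum_one p hp s hs1 hc
  have key : ∀ ω, klDiv (s ω) y = klDiv (s ω) β + ∑ a, s ω a * Real.log (β a / y a) := by
    intro ω
    unfold klDiv
    rw [← Finset.sum_add_distrib]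
    refine Finset.sum_congr rfl fun a _ => ?_
    rw [← mul_add]
    congr 1
    rw [Real.log_div (ne_of_gt (hspos ω a)) (ne_of_gt (hβpos a)),
        Real.log_div (ne_of_gt (hβpos a)) (ne_of_gt (hy a)),
        Real.log_div (ne_of_gt (hspos ω a)) (ne_of_gt (hy a))]
    ring
  have hsum : ∑ ω ∈ c, p ω * klDiv (s ω) y
      = (∑ ω ∈ c, p ω * klDiv (s ω) β) + (∑ ω ∈ c, p ω) * klDiv β y := by
    have : ∀ ω ∈ c, p ω * klDiv (s ω) y
        = p ω * klDiv (s ω) β + ∑ a, p ω * s ω a * Real.log (β a / y a) := by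
      intro ω _
      rw [key ω, mul_add, Finset.mul_sum]
      congr 1
      exact Finset.sum_congr rfl fun a _ => (mul_assoc _ _ _).symm
    rw [Finset.sum_congr rfl this, Finset.sum_add_distrib]
    congr 1
    rw [Finset.sum_comm]
    have : ∀ a, ∑ ω ∈ c, p ω * s ω a * Real.log (β a / y a)
        = (∑ ω ∈ c, p ω) * (β a * Real.log (β a / y a)) := by
      intro a
      rw [← Finset.sum_mul]
      have hβa : β a = (∑ ω ∈ c, p ω * s ω a) / (∑ ω ∈ c, p ω) := rfl
      rw [hβa]
      field_simp
    rw [Finset.sum_congr rfl (fun a _ => this a), ← Finset.mul_sum]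
    rfl
  rw [hsum]
  nlinarith [klDiv_nonneg' hβpos hy hβ1 hy1]

end Aux

/-- **Globally clustered implies locally clustered** (Kullback–Leibler divergence, data
in the interior of the probability simplex): if the partition of `Ω` induced by `g`
minimizes the total weighted KL prediction error among all partitions into at most `K`
nonempty classes, then every point is weakly KL-closer to the prototype of its own
cluster than to the prototype of any other cluster. -/
theorem globally_clustered_implies_locally_clustered_KL
    {Ω A : Type*} [Fintype Ω] [Nonempty Ω] [Fintype A] [Nonempty A]
    (p : Ω → ℝ) (hp : ∀ ω, 0 < p ω) (hp1 : (∑ ω, p ω) = 1)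
    (s : Ω → A → ℝ) (hs : ∀ ω, s ω ∈ stdSimplex ℝ A) (hspos : ∀ ω a, 0 < s ω a)
    (K : ℕ) (hK : 1 ≤ K) (g : Ω → Fin K)
    (hglob : ∀ g' : Ω → Fin K,
      (∑ ω, p ω * klDiv (s ω) (proto p s (cls g ω))) ≤
        ∑ ω, p ω * klDiv (s ω) (proto p s (cls g' ω))) :
    ∀ ω ω' : Ω,
      klDiv (s ω) (proto p s (cls g ω)) ≤ klDiv (s ω) (proto p s (cls g ω')) := by
  intro ω₀ ω'
  classical
  have hs1 : ∀ ω, ∑ a, s ω a = 1 := fun ω => (hs ω).2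
  set op : Fin K → A → ℝ :=
    fun k => proto p s (Finset.univ.filter fun ω'' => g ω'' = k) with hop
  have hcls : ∀ ω : Ω, proto p s (cls g ω) = op (g ω) := fun ω => rfl
  have hfib : ∀ ω : Ω, (Finset.univ.filter fun ω'' => g ω'' = g ω).Nonempty :=
    fun ω => ⟨ω, Finset.mem_filter.2 ⟨Finset.mem_univ _, rfl⟩⟩
  have hoppos : ∀ ω : Ω, ∀ a, 0 < op (g ω) a :=
    fun ω a => proto_pos p hp s hspos (hfib ω) a
  have hopsum : ∀ ω : Ω, ∑ a, op (g ω) a = 1 :=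
    fun ω => proto_sum_one p hp s hs1 (hfib ω)
  set g' : Ω → Fin K := Function.update g ω₀ (g ω') with hg'
  have step1 : (∑ ω, p ω * klDiv (s ω) (proto p s (cls g' ω)))
      ≤ ∑ ω, p ω * klDiv (s ω) (op (g' ω)) := by
    rw [← Finset.sum_fiberwise Finset.univ g'
          (fun ω => p ω * klDiv (s ω) (proto p s (cls g' ω))),
        ← Finset.sum_fiberwise Finset.univ g'
          (fun ω => p ω * klDiv (s ω) (op (g' ω)))]
    apply Finset.sum_le_sum
    intro k _
    by_cases hne : (Finset.univ.filter fun ω => g' ω = k).Nonempty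
    · obtain ⟨ω₁, hω₁⟩ := hne
      have hk : g' ω₁ = k := (Finset.mem_filter.1 hω₁).2
      obtain ⟨ω₂, hω₂⟩ : ∃ ω₂, g ω₂ = k := by
        by_cases h : ω₁ = ω₀
        · exact ⟨ω', by rw [← hk, h]; simp [hg']⟩
        · exact ⟨ω₁, by rw [← hk]; simp [hg', Function.update_of_ne h]⟩
      have heq1 : ∑ ω ∈ Finset.univ.filter (fun ω => g' ω = k),
            p ω * klDiv (s ω) (proto p s (cls g' ω))
          = ∑ ω ∈ Finset.univ.filter (fun ω => g' ω = k),
            p ω * klDiv (s ω) (proto p s (Finset.univ.filter fun ω'' => g' ω'' = k)) := by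
        refine Finset.sum_congr rfl fun ω hω => ?_
        have h1 : g' ω = k := (Finset.mem_filter.1 hω).2
        have : cls g' ω = Finset.univ.filter fun ω'' => g' ω'' = k := by
          unfold cls; rw [h1]
        rw [this]
      have heq2 : ∑ ω ∈ Finset.univ.filter (fun ω => g' ω = k),
            p ω * klDiv (s ω) (op (g' ω))
          = ∑ ω ∈ Finset.univ.filter (fun ω => g' ω = k),
            p ω * klDiv (s ω) (op k) := by
        refine Finset.sum_congr rfl fun ω hω => ?_
        rw [(Finset.mem_filter.1 hω).2]
      rw [heq1, heq2]
      exact centroid_opt p hp s hspos hs1 ⟨ω₁, hω₁⟩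
        (hω₂ ▸ hoppos ω₂) (hω₂ ▸ hopsum ω₂)
    · rw [Finset.not_nonempty_iff_eq_empty] at hne
      rw [hne]; simp
  have step2 : (∑ ω, p ω * klDiv (s ω) (op (g ω)))
      ≤ ∑ ω, p ω * klDiv (s ω) (op (g' ω)) := by
    calc (∑ ω, p ω * klDiv (s ω) (op (g ω)))
        = ∑ ω, p ω * klDiv (s ω) (proto p s (cls g ω)) := by
          exact Finset.sum_congr rfl fun ω _ => by rw [hcls]
      _ ≤ ∑ ω, p ω * klDiv (s ω) (proto p s (cls g' ω)) := hglob g'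
      _ ≤ _ := step1
  have hsame : ∀ ω ∈ Finset.univ.erase ω₀,
      p ω * klDiv (s ω) (op (g ω)) = p ω * klDiv (s ω) (op (g' ω)) := by
    intro ω hω
    rw [hg', Function.update_of_ne (Finset.mem_erase.1 hω).1]
  have h1 : (∑ ω, p ω * klDiv (s ω) (op (g ω)))
      = p ω₀ * klDiv (s ω₀) (op (g ω₀))
        + ∑ ω ∈ Finset.univ.erase ω₀, p ω * klDiv (s ω) (op (g ω)) :=
    (Finset.add_sum_erase _ _ (Finset.mem_univ ω₀)).symm
  have h2 : (∑ ω, p ω * klDiv (s ω) (op (g' ω)))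
      = p ω₀ * klDiv (s ω₀) (op (g' ω₀))
        + ∑ ω ∈ Finset.univ.erase ω₀, p ω * klDiv (s ω) (op (g ω)) := by
    rw [Finset.sum_congr rfl hsame]
    exact (Finset.add_sum_erase _ _ (Finset.mem_univ ω₀)).symm
  have h3 : p ω₀ * klDiv (s ω₀) (op (g ω₀)) ≤ p ω₀ * klDiv (s ω₀) (op (g' ω₀)) := by
    rw [h1, h2] at step2; linarith
  have h4 : klDiv (s ω₀) (op (g ω₀)) ≤ klDiv (s ω₀) (op (g' ω₀)) :=
    le_of_mul_le_mul_left h3 (hp ω₀)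
  rw [hcls ω₀, hcls ω']
  have : g' ω₀ = g ω' := by rw [hg']; simp
  rwa [this] at h4
end
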